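/- arXiv:1404.5607 — 4 statements merged into one kernel-verified Lean document; each statement's English description precedes it below -/
import Mathlib

section
/- Under assumptions (A1) and (A2), the operator S̃(x₁,x₂) := Ã(x₁,x₂,R̃(x₁,x₂)) satisfies ⟨S̃(x₁,x₂) − S̃(x₂,x₂), x₁ − x₂⟩ ≥ ((α_A α_B − β_A β_B)/α_B) ‖x₁ − x₂‖_X² for all x₁, x₂ ∈ X. -/
open Filter Topology

/-- Under (A1) and (A2), the reduced operator `S̃(x₁,x₂) := Ã(x₁,x₂,R̃(x₁,x₂))`
satisfies `⟨S̃(x₁,x₂) - S̃(x₂,x₂), x₁ - x₂⟩ ≥ ((α_A α_B - β_A β_B)/α_B) ‖x₁-x₂‖²`. -/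
theorem reduced_operator_monotone {X Y : Type*} [NormedAddCommGroup X] [NormedSpace ℝ X]
    [NormedAddCommGroup Y] [NormedSpace ℝ Y]
    (A : X → X → Y → (X →L[ℝ] ℝ)) (B : X → X → Y → (Y →L[ℝ] ℝ)) (y₀ : Y →L[ℝ] ℝ)
    (αA αB βA βB : ℝ) (hαA : 0 < αA) (hαB : 0 < αB) (hβA : 0 ≤ βA) (hβB : 0 ≤ βB)
    -- (A1.3) uniform strong monotonicity of `y ↦ B̃(x₁,x₂,y)`
    (hBmono : ∀ (x₁ x₂ : X) (y₁ y₂ : Y),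
      αB * ‖y₁ - y₂‖ ^ 2 ≤ (B x₁ x₂ y₁ - B x₁ x₂ y₂) (y₁ - y₂))
    -- (A1.3) radial continuity of `y ↦ B̃(x₁,x₂,y)`
    (hBrad : ∀ (x₁ x₂ : X) (y v : Y),
      ContinuousAt (fun t : ℝ => B x₁ x₂ (y + t • v) v) 0)
    -- (A2.1)
    (hAmono : ∀ (x₁ x₂ : X) (y : Y),
      αA * ‖x₁ - x₂‖ ^ 2 ≤ (A x₁ x₂ y - A x₂ x₂ y) (x₁ - x₂))
    -- (A2.2)
    (hAlip : ∀ (x₁ x₂ : X) (y₁ y₂ : Y),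
      ‖A x₁ x₂ y₁ - A x₁ x₂ y₂‖ ≤ βA * ‖y₁ - y₂‖)
    -- (A2.3)
    (hBlip : ∀ (x₁ x₂ : X) (y : Y),
      ‖B x₁ x₂ y - B x₂ x₂ y‖ ≤ βB * ‖x₁ - x₂‖)
    -- `R̃(x₁,x₂)` is the solution of `B̃(x₁,x₂, ·) = y₀*`
    (R : X → X → Y) (hR : ∀ x₁ x₂ : X, B x₁ x₂ (R x₁ x₂) = y₀) :
    ∀ x₁ x₂ : X,
      ((αA * αB - βA * βB) / αB) * ‖x₁ - x₂‖ ^ 2 ≤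
        (A x₁ x₂ (R x₁ x₂) - A x₂ x₂ (R x₂ x₂)) (x₁ - x₂) := by

  intro x₁ x₂
  set y₁ := R x₁ x₂ with hy₁
  set y₂ := R x₂ x₂ with hy₂
  -- bound on ‖y₁ - y₂‖
  have hkey : αB * ‖y₁ - y₂‖ ^ 2 ≤ βB * ‖x₁ - x₂‖ * ‖y₁ - y₂‖ := by
    have h1 := hBmono x₁ x₂ y₁ y₂
    have h2 : (B x₁ x₂ y₁ - B x₁ x₂ y₂) (y₁ - y₂)
        = (B x₂ x₂ y₂ - B x₁ x₂ y₂) (y₁ - y₂) := by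
      rw [hR x₁ x₂, ← hR x₂ x₂]
    have h3 : (B x₂ x₂ y₂ - B x₁ x₂ y₂) (y₁ - y₂)
        ≤ ‖B x₂ x₂ y₂ - B x₁ x₂ y₂‖ * ‖y₁ - y₂‖ := by
      calc (B x₂ x₂ y₂ - B x₁ x₂ y₂) (y₁ - y₂)
          ≤ |(B x₂ x₂ y₂ - B x₁ x₂ y₂) (y₁ - y₂)| := le_abs_self _
        _ ≤ ‖B x₂ x₂ y₂ - B x₁ x₂ y₂‖ * ‖y₁ - y₂‖ := (B x₂ x₂ y₂ - B x₁ x₂ y₂).le_opNorm _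
    have h4 : ‖B x₂ x₂ y₂ - B x₁ x₂ y₂‖ ≤ βB * ‖x₁ - x₂‖ := by
      rw [norm_sub_rev]; exact hBlip x₁ x₂ y₂
    calc αB * ‖y₁ - y₂‖ ^ 2 ≤ (B x₂ x₂ y₂ - B x₁ x₂ y₂) (y₁ - y₂) := h2 ▸ h1
      _ ≤ ‖B x₂ x₂ y₂ - B x₁ x₂ y₂‖ * ‖y₁ - y₂‖ := h3
      _ ≤ βB * ‖x₁ - x₂‖ * ‖y₁ - y₂‖ := by
          exact mul_le_mul_of_nonneg_right h4 (norm_nonneg _)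
  have hyb : αB * ‖y₁ - y₂‖ ≤ βB * ‖x₁ - x₂‖ := by
    rcases eq_or_ne (y₁ - y₂) 0 with h | h
    · simp [h]; positivity
    · have hn : 0 < ‖y₁ - y₂‖ := norm_pos_iff.mpr h
      have := hkey
      nlinarith [hn]
  -- split A
  have hsplit : (A x₁ x₂ y₁ - A x₂ x₂ y₂) (x₁ - x₂)
      = (A x₁ x₂ y₂ - A x₂ x₂ y₂) (x₁ - x₂) + (A x₁ x₂ y₁ - A x₁ x₂ y₂) (x₁ - x₂) := by
    simp only [ContinuousLinearMap.sub_apply]; ring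
  have h1 : αA * ‖x₁ - x₂‖ ^ 2 ≤ (A x₁ x₂ y₂ - A x₂ x₂ y₂) (x₁ - x₂) := hAmono x₁ x₂ y₂
  have h2 : -(βA * ‖y₁ - y₂‖ * ‖x₁ - x₂‖) ≤ (A x₁ x₂ y₁ - A x₁ x₂ y₂) (x₁ - x₂) := by
    have ha : |(A x₁ x₂ y₁ - A x₁ x₂ y₂) (x₁ - x₂)| ≤ ‖A x₁ x₂ y₁ - A x₁ x₂ y₂‖ * ‖x₁ - x₂‖ :=
      (A x₁ x₂ y₁ - A x₁ x₂ y₂).le_opNorm _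
    have hb : ‖A x₁ x₂ y₁ - A x₁ x₂ y₂‖ * ‖x₁ - x₂‖ ≤ βA * ‖y₁ - y₂‖ * ‖x₁ - x₂‖ :=
      mul_le_mul_of_nonneg_right (hAlip x₁ x₂ y₁ y₂) (norm_nonneg _)
    have := neg_abs_le ((A x₁ x₂ y₁ - A x₁ x₂ y₂) (x₁ - x₂))
    linarith [ha.trans hb]
  have hfin : ((αA * αB - βA * βB) / αB) * ‖x₁ - x₂‖ ^ 2
      ≤ αA * ‖x₁ - x₂‖ ^ 2 - βA * ‖y₁ - y₂‖ * ‖x₁ - x₂‖ := by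
    have h : βA * ‖y₁ - y₂‖ * ‖x₁ - x₂‖ ≤ (βA * βB / αB) * ‖x₁ - x₂‖ ^ 2 := by
      have := mul_le_mul_of_nonneg_left hyb hβA
      have hx : 0 ≤ ‖x₁ - x₂‖ := norm_nonneg _
      rw [div_mul_eq_mul_div, le_div_iff₀ hαB]
      nlinarith
    have : ((αA * αB - βA * βB) / αB) * ‖x₁ - x₂‖ ^ 2
        = αA * ‖x₁ - x₂‖ ^ 2 - (βA * βB / αB) * ‖x₁ - x₂‖ ^ 2 := by
      field_simp
    linarith
  rw [hsplit]; linarith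
end

section
/- If B̃_{x₀} : X_T × Y → Y* is sequentially solutionally continuous in x₀ and y₀* (where X_T is X with some topology T), then the map x ↦ R̃(x₀, x) from X_T into Y is continuous at x₀. -/
open Filter Topology

/-! Strong monotonicity with constant `α` gives the stability estimate
`α ‖u - v‖ ≤ ‖B(u) - B(v)‖`. Applied to `B̃(x₀, x_n, ·)` with `u = R̃(x₀, x_n)` and
`v = R̃(x₀, x₀)`, it bounds `‖R̃(x₀, x_n) - R̃(x₀, x₀)‖` by `‖y₀* - B̃(x₀, x_n, R̃(x₀, x₀))‖ / α`,
which tends to zero by solutional continuity. -/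

section StronglyMonotone

variable {E : Type*} [NormedAddCommGroup E] [NormedSpace ℝ E]

def StronglyMonotoneWith (α : ℝ) (F : E → E →L[ℝ] ℝ) : Prop :=
  ∀ y₁ y₂ : E, α * ‖y₁ - y₂‖ ^ 2 ≤ (F y₁ - F y₂) (y₁ - y₂)

theorem StronglyMonotoneWith.mul_norm_sub_le {α : ℝ} {F : E → E →L[ℝ] ℝ}
    (hF : StronglyMonotoneWith α F) (y₁ y₂ : E) :
    α * ‖y₁ - y₂‖ ≤ ‖F y₁ - F y₂‖ := by
  rcases (norm_nonneg (y₁ - y₂)).eq_or_lt with h0 | hpos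
  · rw [← h0, mul_zero]
    exact norm_nonneg _
  · refine le_of_mul_le_mul_right ?_ hpos
    calc α * ‖y₁ - y₂‖ * ‖y₁ - y₂‖ = α * ‖y₁ - y₂‖ ^ 2 := by ring
      _ ≤ (F y₁ - F y₂) (y₁ - y₂) := hF y₁ y₂
      _ ≤ ‖F y₁ - F y₂‖ * ‖y₁ - y₂‖ := (le_abs_self _).trans ((F y₁ - F y₂).le_opNorm _)

theorem tendsto_of_stronglyMonotoneWith {ι : Type*} {l : Filter ι} {α : ℝ} (hα : 0 < α)
    {F : ι → E → E →L[ℝ] ℝ} (hF : ∀ i, StronglyMonotoneWith α (F i))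
    {f : E →L[ℝ] ℝ} {u : ι → E} (hu : ∀ i, F i (u i) = f) {v : E}
    (hv : Tendsto (fun i => F i v) l (𝓝 f)) :
    Tendsto u l (𝓝 v) := by
  rw [tendsto_iff_norm_sub_tendsto_zero] at hv ⊢
  have hbound : ∀ i, ‖u i - v‖ ≤ ‖F i v - f‖ / α := fun i => by
    rw [le_div_iff₀' hα, norm_sub_rev (F i v), ← hu i]
    exact (hF i).mul_norm_sub_le _ _
  refine squeeze_zero (fun _ => norm_nonneg _) hbound ?_
  simpa using hv.div_const α

end StronglyMonotone

theorem solution_operator_continuous_general {X Y : Type*} [NormedAddCommGroup X] [NormedSpace ℝ X]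
    [NormedAddCommGroup Y] [NormedSpace ℝ Y]
    (𝕋 : TopologicalSpace X)
    (B : X → X → Y → (Y →L[ℝ] ℝ)) (y₀ : Y →L[ℝ] ℝ)
    (αB : ℝ) (hαB : 0 < αB)
    -- (A1.3) uniform strong monotonicity of `y ↦ B̃(x₁,x₂,y)`
    (hmono : ∀ (x₁ x₂ : X) (y₁ y₂ : Y),
      αB * ‖y₁ - y₂‖ ^ 2 ≤ (B x₁ x₂ y₁ - B x₁ x₂ y₂) (y₁ - y₂))
    -- `R̃(x₁,x₂)` is the solution of `B̃(x₁,x₂, ·) = y₀*`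
    (R : X → X → Y) (hR : ∀ x₁ x₂ : X, B x₁ x₂ (R x₁ x₂) = y₀)
    (x₀ : X)
    -- sequential solutional continuity of `(x,y) ↦ B̃(x₀,x,y)` in `x₀` and `y₀*`:
    -- ... and convergence `B̃(x₀, x_n, y) → y₀*` for every `x_n → x₀` in `X_T`
    (hssc : ∀ x : ℕ → X, Tendsto x atTop (@nhds X 𝕋 x₀) →
      Tendsto (fun n => B x₀ (x n) (R x₀ x₀)) atTop (𝓝 y₀)) :
    ∀ x : ℕ → X, Tendsto x atTop (@nhds X 𝕋 x₀) →
      Tendsto (fun n => R x₀ (x n)) atTop (𝓝 (R x₀ x₀)) :=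
  fun x hx => tendsto_of_stronglyMonotoneWith hαB (fun n => hmono x₀ (x n))
    (fun n => hR x₀ (x n)) (hssc x hx)

/-- If `B̃_{x₀} : X_T × Y → Y*` is sequentially solutionally continuous in `x₀`
and `y₀*` (`X_T` being `X` with an arbitrary topology `𝕋`), then
`x ↦ R̃(x₀, x)` from `X_T` into `Y` is (sequentially) continuous at `x₀`. -/
theorem solution_operator_continuous {X Y : Type*} [NormedAddCommGroup X] [NormedSpace ℝ X]
    [NormedAddCommGroup Y] [NormedSpace ℝ Y]
    (𝕋 : TopologicalSpace X)
    (B : X → X → Y → (Y →L[ℝ] ℝ)) (y₀ : Y →L[ℝ] ℝ)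
    (αB : ℝ) (hαB : 0 < αB)
    -- (A1.3) uniform strong monotonicity of `y ↦ B̃(x₁,x₂,y)`
    (hmono : ∀ (x₁ x₂ : X) (y₁ y₂ : Y),
      αB * ‖y₁ - y₂‖ ^ 2 ≤ (B x₁ x₂ y₁ - B x₁ x₂ y₂) (y₁ - y₂))
    -- (A1.3) radial continuity of `y ↦ B̃(x₁,x₂,y)`
    (hrad : ∀ (x₁ x₂ : X) (y v : Y),
      ContinuousAt (fun t : ℝ => B x₁ x₂ (y + t • v) v) 0)
    -- `R̃(x₁,x₂)` is the solution of `B̃(x₁,x₂, ·) = y₀*`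
    (R : X → X → Y) (hR : ∀ x₁ x₂ : X, B x₁ x₂ (R x₁ x₂) = y₀)
    (x₀ : X)
    -- sequential solutional continuity of `(x,y) ↦ B̃(x₀,x,y)` in `x₀` and `y₀*`:
    -- uniqueness of the solution of `B̃(x₀,x₀,·) = y₀*` ...
    (huniq : ∀ y : Y, B x₀ x₀ y = y₀ → y = R x₀ x₀)
    -- ... and convergence `B̃(x₀, x_n, y) → y₀*` for every `x_n → x₀` in `X_T`
    (hssc : ∀ x : ℕ → X, Tendsto x atTop (@nhds X 𝕋 x₀) →
      Tendsto (fun n => B x₀ (x n) (R x₀ x₀)) atTop (𝓝 y₀)) :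
    ∀ x : ℕ → X, Tendsto x atTop (@nhds X 𝕋 x₀) →
      Tendsto (fun n => R x₀ (x n)) atTop (𝓝 (R x₀ x₀)) :=
  solution_operator_continuous_general 𝕋 B y₀ αB hαB hmono R hR x₀ hssc
end

section
/- Under (A2), if for every x₀ ∈ X and y ∈ Y the map x ↦ R̃(x₀,x) is continuous and x ↦ A(x,y) is demicontinuous, then the operator S x := A(x, R x), where R x := R̃(x,x), is demicontinuous (i.e. x_n → x implies S x_n ⇀ S x). -/
open Filter Topology

/-!
Strong monotonicity of `B̃` makes `R̃(·, x)` Lipschitz in its first argument with constant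
`β_B / α_B`; together with continuity of `R̃(x₀, ·)` this makes `R x = R̃(x, x)` strongly
continuous. Since `A(x, ·)` is Lipschitz uniformly in `x`, replacing `R xₙ` by its limit `R x`
costs only `β_A ‖R xₙ - R x‖ ‖v‖`, and the remaining term converges by demicontinuity of
`A(·, y)` at the fixed `y = R x`.
-/

theorem mul_norm_sub_le_norm_sub_of_strongly_monotone {Y : Type*} [NormedAddCommGroup Y]
    [NormedSpace ℝ Y] {F G : Y → (Y →L[ℝ] ℝ)} {α : ℝ}
    (hF : ∀ y₁ y₂, α * ‖y₁ - y₂‖ ^ 2 ≤ (F y₁ - F y₂) (y₁ - y₂)) {y z : Y} (hyz : F z = G y) :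
    α * ‖y - z‖ ≤ ‖F y - G y‖ := by
  rcases (norm_nonneg (y - z)).eq_or_lt with h0 | hpos
  · rw [← h0, mul_zero]
    exact norm_nonneg _
  refine le_of_mul_le_mul_right ?_ hpos
  calc α * ‖y - z‖ * ‖y - z‖ = α * ‖y - z‖ ^ 2 := by ring
    _ ≤ (F y - F z) (y - z) := hF y z
    _ = (F y - G y) (y - z) := by rw [hyz]
    _ ≤ ‖F y - G y‖ * ‖y - z‖ := (le_abs_self _).trans ((F y - G y).le_opNorm _)

theorem continuous_diag_of_dist_le {X Y : Type*} [PseudoMetricSpace X] [PseudoMetricSpace Y]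
    {f : X → X → Y} {C : ℝ} (hcont : ∀ a, Continuous (f a))
    (hdist : ∀ a x, dist (f a x) (f x x) ≤ C * dist a x) :
    Continuous fun x => f x x := by
  refine continuous_iff_continuousAt.2 fun a => ?_
  have hsmall : Tendsto (fun x => C * dist a x) (𝓝 a) (𝓝 0) := by
    simpa using ((continuous_const (y := a)).dist continuous_id |>.tendsto a).const_mul C
  exact ((hcont a).tendsto a).congr_dist
    (squeeze_zero (fun _ => dist_nonneg) (hdist a) hsmall)

theorem tendsto_apply_of_uniform_dist_le {ι Y Z : Type*} [PseudoMetricSpace Y]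
    [PseudoMetricSpace Z] {l : Filter ι} {T : ι → Y → Z} {K : ℝ} {r : ι → Y} {y : Y} {z : Z}
    (hT : ∀ i y₁ y₂, dist (T i y₁) (T i y₂) ≤ K * dist y₁ y₂)
    (hTy : Tendsto (fun i => T i y) l (𝓝 z)) (hr : Tendsto r l (𝓝 y)) :
    Tendsto (fun i => T i (r i)) l (𝓝 z) := by
  have hsmall : Tendsto (fun i => K * dist y (r i)) l (𝓝 0) := by
    simpa using ((tendsto_const_nhds (x := y)).dist hr).const_mul K
  exact hTy.congr_dist (squeeze_zero (fun _ => dist_nonneg) (fun i => hT i y (r i)) hsmall)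

theorem reduced_operator_demicontinuous_general {X Y : Type*}
    [NormedAddCommGroup X] [NormedSpace ℝ X]
    [NormedAddCommGroup Y] [NormedSpace ℝ Y]
    (A : X → X → Y → (X →L[ℝ] ℝ)) (B : X → X → Y → (Y →L[ℝ] ℝ)) (y₀ : Y →L[ℝ] ℝ)
    (αB βA βB : ℝ) (hαB : 0 < αB)
    -- (A1.3) uniform strong monotonicity of `y ↦ B̃(x₁,x₂,y)`
    (hBmono : ∀ (x₁ x₂ : X) (y₁ y₂ : Y),
      αB * ‖y₁ - y₂‖ ^ 2 ≤ (B x₁ x₂ y₁ - B x₁ x₂ y₂) (y₁ - y₂))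
    -- (A2.2)
    (hAlip : ∀ (x₁ x₂ : X) (y₁ y₂ : Y),
      ‖A x₁ x₂ y₁ - A x₁ x₂ y₂‖ ≤ βA * ‖y₁ - y₂‖)
    -- (A2.3)
    (hBlip : ∀ (x₁ x₂ : X) (y : Y),
      ‖B x₁ x₂ y - B x₂ x₂ y‖ ≤ βB * ‖x₁ - x₂‖)
    -- `R̃(x₁,x₂)` is the solution of `B̃(x₁,x₂, ·) = y₀*`
    (R : X → X → Y) (hR : ∀ x₁ x₂ : X, B x₁ x₂ (R x₁ x₂) = y₀)
    -- `x ↦ R̃(x₀,x)` is continuous for every `x₀`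
    (hRcont : ∀ x₀ : X, Continuous (fun x => R x₀ x))
    -- `x ↦ A(x,y) = Ã(x,x,y)` is demicontinuous for every `y`
    (hAdemi : ∀ (y : Y) (x : ℕ → X) (xl : X), Tendsto x atTop (𝓝 xl) →
      ∀ v : X, Tendsto (fun n => A (x n) (x n) y v) atTop (𝓝 (A xl xl y v))) :
    -- `S` is demicontinuous
    ∀ (x : ℕ → X) (xl : X), Tendsto x atTop (𝓝 xl) →
      ∀ v : X, Tendsto (fun n => A (x n) (x n) (R (x n) (x n)) v) atTop
        (𝓝 (A xl xl (R xl xl) v)) := by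
  intro x xl hx v
  have hRdist : ∀ a b, dist (R a b) (R b b) ≤ βB / αB * dist a b := by
    intro a b
    rw [dist_comm, dist_eq_norm, dist_eq_norm, div_mul_eq_mul_div, le_div_iff₀ hαB, mul_comm]
    exact (mul_norm_sub_le_norm_sub_of_strongly_monotone (hBmono a b)
      ((hR a b).trans (hR b b).symm)).trans (hBlip a b _)
  have hAdist : ∀ n y₁ y₂, dist (A (x n) (x n) y₁ v) (A (x n) (x n) y₂ v)
      ≤ βA * ‖v‖ * dist y₁ y₂ := by
    intro n y₁ y₂
    rw [dist_eq_norm, dist_eq_norm, ← sub_apply, mul_right_comm]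
    exact ((A _ _ y₁ - A _ _ y₂).le_opNorm v).trans
      (mul_le_mul_of_nonneg_right (hAlip _ _ y₁ y₂) (norm_nonneg v))
  exact tendsto_apply_of_uniform_dist_le (T := fun n y => A (x n) (x n) y v) hAdist
    (hAdemi (R xl xl) x xl hx v) ((continuous_diag_of_dist_le hRcont hRdist).tendsto xl |>.comp hx)

/-- Under (A2), if `x ↦ R̃(x₀,x)` is continuous and `x ↦ A(x,y)` is
demicontinuous (for every `x₀ ∈ X`, `y ∈ Y`), then the reduced operator
`S x := A(x, R x)` with `R x := R̃(x,x)` is demicontinuous. -/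
theorem reduced_operator_demicontinuous {X Y : Type*}
    [NormedAddCommGroup X] [NormedSpace ℝ X]
    [NormedAddCommGroup Y] [NormedSpace ℝ Y]
    (A : X → X → Y → (X →L[ℝ] ℝ)) (B : X → X → Y → (Y →L[ℝ] ℝ)) (y₀ : Y →L[ℝ] ℝ)
    (αB βA βB : ℝ) (hαB : 0 < αB) (hβA : 0 ≤ βA) (hβB : 0 ≤ βB)
    -- (A1.3) uniform strong monotonicity of `y ↦ B̃(x₁,x₂,y)`
    (hBmono : ∀ (x₁ x₂ : X) (y₁ y₂ : Y),
      αB * ‖y₁ - y₂‖ ^ 2 ≤ (B x₁ x₂ y₁ - B x₁ x₂ y₂) (y₁ - y₂))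
    -- (A1.3) radial continuity of `y ↦ B̃(x₁,x₂,y)`
    (hBrad : ∀ (x₁ x₂ : X) (y v : Y),
      ContinuousAt (fun t : ℝ => B x₁ x₂ (y + t • v) v) 0)
    -- (A2.2)
    (hAlip : ∀ (x₁ x₂ : X) (y₁ y₂ : Y),
      ‖A x₁ x₂ y₁ - A x₁ x₂ y₂‖ ≤ βA * ‖y₁ - y₂‖)
    -- (A2.3)
    (hBlip : ∀ (x₁ x₂ : X) (y : Y),
      ‖B x₁ x₂ y - B x₂ x₂ y‖ ≤ βB * ‖x₁ - x₂‖)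
    -- `R̃(x₁,x₂)` is the solution of `B̃(x₁,x₂, ·) = y₀*`
    (R : X → X → Y) (hR : ∀ x₁ x₂ : X, B x₁ x₂ (R x₁ x₂) = y₀)
    -- `x ↦ R̃(x₀,x)` is continuous for every `x₀`
    (hRcont : ∀ x₀ : X, Continuous (fun x => R x₀ x))
    -- `x ↦ A(x,y) = Ã(x,x,y)` is demicontinuous for every `y`
    (hAdemi : ∀ (y : Y) (x : ℕ → X) (xl : X), Tendsto x atTop (𝓝 xl) →
      ∀ v : X, Tendsto (fun n => A (x n) (x n) y v) atTop (𝓝 (A xl xl y v))) :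
    -- `S` is demicontinuous
    ∀ (x : ℕ → X) (xl : X), Tendsto x atTop (𝓝 xl) →
      ∀ v : X, Tendsto (fun n => A (x n) (x n) (R (x n) (x n)) v) atTop
        (𝓝 (A xl xl (R xl xl) v)) :=
  reduced_operator_demicontinuous_general A B y₀ αB βA βB hαB hBmono hAlip hBlip R hR hRcont hAdemi
end

section
/- For every h ∈ H, the operator L_h (restriction of the generalized time derivative L u := (E u)' to {u ∈ W : (K u)(0) = h}) is maximal monotone as an operator from V := L²(T;V) to V* := L²(T;V*). -/
/-! Monotonicity of `L_h` is inherited from `L̂`: on `{tr u = h}` the `H`-part of the monotonicity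
pairing of `L̂` vanishes. For surjectivity of `L_h + J`, solve
`L̂ (u, tr u) + J_{𝒱×H} (u, tr u) = (f, J_H (2h))`: its `H`-component reads `2 J_H (tr u) = 2 J_H h`,
so `tr u = h`, and its `𝒱`-component is `L u + J u = f`. -/

/-- A (multi-valued) operator, identified with its graph `G ⊆ Z × Z*`,
is monotone. -/
def IsMonotoneGraph {Z : Type*} [NormedAddCommGroup Z] [NormedSpace ℝ Z]
    (G : Set (Z × (Z →L[ℝ] ℝ))) : Prop :=
  ∀ p ∈ G, ∀ q ∈ G, 0 ≤ (p.2 - q.2) (p.1 - q.1)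

/-- A monotone graph is maximal monotone if it has no proper monotone extension. -/
def IsMaximalMonotone {Z : Type*} [NormedAddCommGroup Z] [NormedSpace ℝ Z]
    (G : Set (Z × (Z →L[ℝ] ℝ))) : Prop :=
  IsMonotoneGraph G ∧ ∀ G', IsMonotoneGraph G' → G ⊆ G' → G' = G

open ContinuousLinearMap

section InitialValueGraph

variable {𝒱 H : Type*} [NormedAddCommGroup 𝒱] [NormedSpace ℝ 𝒱]
  [NormedAddCommGroup H] [InnerProductSpace ℝ H] {W : Submodule ℝ 𝒱}

/-- The graph of `L̂`, with `J_H g = ⟪g, ·⟫` and `(𝒱 × H)*` identified with `𝒱* × H*` through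
`coprod`. -/
def augmentedGraph (L : W →ₗ[ℝ] (𝒱 →L[ℝ] ℝ)) (tr : W →ₗ[ℝ] H) :
    Set ((𝒱 × H) × ((𝒱 × H) →L[ℝ] ℝ)) :=
  {p | ∃ u : W, p.1 = ((u : 𝒱), tr u) ∧ p.2 = (L u).coprod (innerSL ℝ (tr u))}

def initialValueGraph (L : W →ₗ[ℝ] (𝒱 →L[ℝ] ℝ)) (tr : W →ₗ[ℝ] H) (h : H) :
    Set (𝒱 × (𝒱 →L[ℝ] ℝ)) :=
  {p | ∃ u : W, tr u = h ∧ p = ((u : 𝒱), L u)}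

variable {L : W →ₗ[ℝ] (𝒱 →L[ℝ] ℝ)} {tr : W →ₗ[ℝ] H}

theorem mk_mem_augmentedGraph (u : W) :
    (((u : 𝒱), tr u), (L u).coprod (innerSL ℝ (tr u))) ∈ augmentedGraph L tr :=
  ⟨u, rfl, rfl⟩

theorem IsMonotoneGraph.initialValueGraph (hmono : IsMonotoneGraph (augmentedGraph L tr))
    (h : H) : IsMonotoneGraph (initialValueGraph L tr h) := by
  rintro _ ⟨u, rfl, rfl⟩ _ ⟨v, hv, rfl⟩
  simpa [hv] using hmono _ (mk_mem_augmentedGraph u) _ (mk_mem_augmentedGraph v)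

theorem exists_mem_initialValueGraph_add_eq (J : 𝒱 → (𝒱 →L[ℝ] ℝ))
    (hsurj : ∀ F : (𝒱 × H) →L[ℝ] ℝ,
      ∃ p ∈ augmentedGraph L tr, p.2 + (J p.1.1).coprod (innerSL ℝ p.1.2) = F)
    (h : H) (f : 𝒱 →L[ℝ] ℝ) : ∃ p ∈ initialValueGraph L tr h, p.2 + J p.1 = f := by
  obtain ⟨⟨x, F⟩, ⟨u, rfl, rfl⟩, hu⟩ := hsurj (f.coprod (innerSL ℝ (h + h)))
  rw [← coprod_add] at hu
  have hV : L u + J u = f := by simpa using congrArg (·.comp (inl ℝ 𝒱 H)) hu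
  have htr : tr u = h := by
    simpa [← two_smul ℝ] using congrArg (·.comp (inr ℝ 𝒱 H)) hu
  exact ⟨((u : 𝒱), L u), ⟨u, htr, rfl⟩, hV⟩

end InitialValueGraph

theorem Lh_maximal_monotone_general {𝒱 H : Type*}
    [NormedAddCommGroup 𝒱] [NormedSpace ℝ 𝒱]
    [NormedAddCommGroup H] [InnerProductSpace ℝ H]
    (W : Submodule ℝ 𝒱)
    (L : W →ₗ[ℝ] (𝒱 →L[ℝ] ℝ)) (tr : W →ₗ[ℝ] H)
    (J : 𝒱 → (𝒱 →L[ℝ] ℝ))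
    -- the graph of the extended operator `L̂` on `𝒱 × H`
    (Lhat : Set ((𝒱 × H) × ((𝒱 × H) →L[ℝ] ℝ)))
    (hLhat : Lhat = {p | ∃ u : W, p.1 = ((u : 𝒱), tr u) ∧
      p.2 = (L u).comp (ContinuousLinearMap.fst ℝ 𝒱 H) +
        ((innerSL ℝ (tr u)).comp (ContinuousLinearMap.snd ℝ 𝒱 H))})
    -- the duality map of the product `𝒱 × H` is `(v,g) ↦ (J v, J_H g)`
    (Jprod : 𝒱 × H → ((𝒱 × H) →L[ℝ] ℝ))
    (hJprod : ∀ p : 𝒱 × H, Jprod p =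
      (J p.1).comp (ContinuousLinearMap.fst ℝ 𝒱 H) +
        ((innerSL ℝ p.2).comp (ContinuousLinearMap.snd ℝ 𝒱 H)))
    -- `L̂` is (linear) maximal monotone
    (hmaxhat : IsMaximalMonotone Lhat)
    -- Zeidler's characterization on `𝒱 × H` ...
    (hcharP : ∀ G : Set ((𝒱 × H) × ((𝒱 × H) →L[ℝ] ℝ)), IsMonotoneGraph G →
      ((∀ F : (𝒱 × H) →L[ℝ] ℝ, ∃ p ∈ G, p.2 + Jprod p.1 = F) ↔ IsMaximalMonotone G))
    -- ... and on `𝒱`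
    (hcharV : ∀ G : Set (𝒱 × (𝒱 →L[ℝ] ℝ)), IsMonotoneGraph G →
      ((∀ f : 𝒱 →L[ℝ] ℝ, ∃ p ∈ G, p.2 + J p.1 = f) ↔ IsMaximalMonotone G)) :
    ∀ h : H, IsMaximalMonotone
      {p : 𝒱 × (𝒱 →L[ℝ] ℝ) | ∃ u : W, tr u = h ∧ p = ((u : 𝒱), L u)} := by
  intro h
  have hLhat : Lhat = augmentedGraph L tr := hLhat
  have hJprod : Jprod = fun p ↦ (J p.1).coprod (innerSL ℝ p.2) := funext hJprod
  subst hLhat hJprod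
  have hsurj := (hcharP _ hmaxhat.1).mpr hmaxhat
  exact (hcharV _ (hmaxhat.1.initialValueGraph h)).mp
    (exists_mem_initialValueGraph_add_eq J hsurj h)

/-- For every `h ∈ H`, the operator `L_h` (the restriction of the generalized
time derivative `L u := (E u)'` to `{u ∈ W : (K u)(0) = h}`) is maximal
monotone from `𝒱 = L²(T;V)` into `𝒱*`.  Here `W ⊆ 𝒱` is the domain of `L`,
`tr u := (K u)(0)` the initial trace, `J` the duality map of the strictly
convex reflexive space `𝒱`, and the extended operator
`L̂(u, (K u)(0)) := (L u, J_H (K u)(0))` is maximal monotone; maximal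
monotonicity of a monotone graph is characterized by surjectivity of `G + J`
(Zeidler, Thm. 32.F). -/
theorem Lh_maximal_monotone {𝒱 H : Type*}
    [NormedAddCommGroup 𝒱] [NormedSpace ℝ 𝒱] [CompleteSpace 𝒱]
    [NormedAddCommGroup H] [InnerProductSpace ℝ H] [CompleteSpace H]
    (W : Submodule ℝ 𝒱)
    (L : W →ₗ[ℝ] (𝒱 →L[ℝ] ℝ)) (tr : W →ₗ[ℝ] H)
    (J : 𝒱 → (𝒱 →L[ℝ] ℝ))
    (hJ : ∀ v : 𝒱, J v v = ‖v‖ ^ 2 ∧ ‖J v‖ = ‖v‖)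
    -- the graph of the extended operator `L̂` on `𝒱 × H`
    (Lhat : Set ((𝒱 × H) × ((𝒱 × H) →L[ℝ] ℝ)))
    (hLhat : Lhat = {p | ∃ u : W, p.1 = ((u : 𝒱), tr u) ∧
      p.2 = (L u).comp (ContinuousLinearMap.fst ℝ 𝒱 H) +
        ((innerSL ℝ (tr u)).comp (ContinuousLinearMap.snd ℝ 𝒱 H))})
    -- the duality map of the product `𝒱 × H` is `(v,g) ↦ (J v, J_H g)`
    (Jprod : 𝒱 × H → ((𝒱 × H) →L[ℝ] ℝ))
    (hJprod : ∀ p : 𝒱 × H, Jprod p =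
      (J p.1).comp (ContinuousLinearMap.fst ℝ 𝒱 H) +
        ((innerSL ℝ p.2).comp (ContinuousLinearMap.snd ℝ 𝒱 H)))
    -- `L̂` is (linear) maximal monotone
    (hmaxhat : IsMaximalMonotone Lhat)
    -- Zeidler's characterization on `𝒱 × H` ...
    (hcharP : ∀ G : Set ((𝒱 × H) × ((𝒱 × H) →L[ℝ] ℝ)), IsMonotoneGraph G →
      ((∀ F : (𝒱 × H) →L[ℝ] ℝ, ∃ p ∈ G, p.2 + Jprod p.1 = F) ↔ IsMaximalMonotone G))
    -- ... and on `𝒱`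
    (hcharV : ∀ G : Set (𝒱 × (𝒱 →L[ℝ] ℝ)), IsMonotoneGraph G →
      ((∀ f : 𝒱 →L[ℝ] ℝ, ∃ p ∈ G, p.2 + J p.1 = f) ↔ IsMaximalMonotone G)) :
    ∀ h : H, IsMaximalMonotone
      {p : 𝒱 × (𝒱 →L[ℝ] ℝ) | ∃ u : W, tr u = h ∧ p = ((u : 𝒱), L u)} :=
  Lh_maximal_monotone_general W L tr J Lhat hLhat Jprod hJprod hmaxhat hcharP hcharV
end
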